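/- arXiv:1502.04351 — 3 statements merged into one kernel-verified Lean document; each statement's English description precedes it below -/
import Mathlib

section
/- Define d(a,b) = ((( (a_x-b_x)^2 + (a_y-b_y)^2 )^2 + (a_z-b_z)^2))^{1/4} for a,b ∈ ℝ³. Then d is a metric on ℝ³; in particular it satisfies the triangle inequality. -/
private lemma euclid (p s q t : ℝ) :
    Real.sqrt ((p+q)^2+(s+t)^2) ≤ Real.sqrt (p^2+s^2) + Real.sqrt (q^2+t^2) := by
  have h := norm_add_le (⟨p,s⟩ : ℂ) ⟨q,t⟩
  simpa [Complex.norm_def, Complex.normSq_apply, Complex.normSq_mk, Complex.add_re, Complex.add_im, sq] using h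

private lemma rpow4 (S : ℝ) (h : 0 ≤ S) : S ^ ((1:ℝ)/4) = Real.sqrt (Real.sqrt S) := by
  rw [Real.sqrt_eq_rpow, Real.sqrt_eq_rpow, ← Real.rpow_mul h]
  norm_num

private lemma key2 (R z₁ z₂ r₁ r₂ : ℝ) (hR : 0 ≤ R) (h₁ : 0 ≤ r₁) (h₂ : 0 ≤ r₂)
    (hle : R ≤ (r₁+r₂)^2) :
    Real.sqrt (Real.sqrt (R^2+(z₁+z₂)^2)) ≤
      Real.sqrt (Real.sqrt ((r₁^2)^2+z₁^2)) + Real.sqrt (Real.sqrt ((r₂^2)^2+z₂^2)) := by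
  have hα0 : 0 ≤ Real.sqrt (Real.sqrt ((r₁^2)^2+z₁^2)) := Real.sqrt_nonneg _
  have hβ0 : 0 ≤ Real.sqrt (Real.sqrt ((r₂^2)^2+z₂^2)) := Real.sqrt_nonneg _
  have hαsq : (Real.sqrt (Real.sqrt ((r₁^2)^2+z₁^2)))^2 = Real.sqrt ((r₁^2)^2+z₁^2) :=
    Real.sq_sqrt (Real.sqrt_nonneg _)
  have hβsq : (Real.sqrt (Real.sqrt ((r₂^2)^2+z₂^2)))^2 = Real.sqrt ((r₂^2)^2+z₂^2) :=
    Real.sq_sqrt (Real.sqrt_nonneg _)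
  have h1 : r₁ ≤ Real.sqrt (Real.sqrt ((r₁^2)^2+z₁^2)) := by
    apply Real.le_sqrt_of_sq_le
    apply Real.le_sqrt_of_sq_le
    nlinarith [sq_nonneg z₁]
  have h2 : r₂ ≤ Real.sqrt (Real.sqrt ((r₂^2)^2+z₂^2)) := by
    apply Real.le_sqrt_of_sq_le
    apply Real.le_sqrt_of_sq_le
    nlinarith [sq_nonneg z₂]
  have hmain : Real.sqrt (R^2+(z₁+z₂)^2) ≤
      (Real.sqrt (Real.sqrt ((r₁^2)^2+z₁^2)) + Real.sqrt (Real.sqrt ((r₂^2)^2+z₂^2)))^2 := by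
    have hB : R^2+(z₁+z₂)^2 ≤ ((r₁+r₂)^2)^2+(z₁+z₂)^2 := by nlinarith [hR, hle]
    calc Real.sqrt (R^2+(z₁+z₂)^2)
        ≤ Real.sqrt (((r₁+r₂)^2)^2+(z₁+z₂)^2) := Real.sqrt_le_sqrt hB
      _ = Real.sqrt (((r₁^2+r₂^2)+(2*r₁*r₂))^2+((z₁+z₂)+0)^2) := by congr 1; ring
      _ ≤ Real.sqrt ((r₁^2+r₂^2)^2+(z₁+z₂)^2) + Real.sqrt ((2*r₁*r₂)^2+0^2) :=
          euclid _ _ _ _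
      _ = Real.sqrt ((r₁^2+r₂^2)^2+(z₁+z₂)^2) + 2*(r₁*r₂) := by
          rw [show ((2*r₁*r₂)^2+0^2 : ℝ) = (2*(r₁*r₂))^2 by ring,
            Real.sqrt_sq (by positivity)]
      _ ≤ (Real.sqrt ((r₁^2)^2+z₁^2) + Real.sqrt ((r₂^2)^2+z₂^2)) + 2*(r₁*r₂) := by
          gcongr
          exact euclid _ _ _ _
      _ ≤ (Real.sqrt ((r₁^2)^2+z₁^2) + Real.sqrt ((r₂^2)^2+z₂^2)) +
            2*(Real.sqrt (Real.sqrt ((r₁^2)^2+z₁^2)) * Real.sqrt (Real.sqrt ((r₂^2)^2+z₂^2))) := by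
          gcongr
      _ = (Real.sqrt (Real.sqrt ((r₁^2)^2+z₁^2)) + Real.sqrt (Real.sqrt ((r₂^2)^2+z₂^2)))^2 := by
          rw [add_sq, hαsq, hβsq]; ring
  calc Real.sqrt (Real.sqrt (R^2+(z₁+z₂)^2))
      ≤ Real.sqrt ((Real.sqrt (Real.sqrt ((r₁^2)^2+z₁^2)) +
          Real.sqrt (Real.sqrt ((r₂^2)^2+z₂^2)))^2) := Real.sqrt_le_sqrt hmain
    _ = _ := Real.sqrt_sq (by positivity)

private lemma key (x₁ y₁ z₁ x₂ y₂ z₂ : ℝ) :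
    Real.sqrt (Real.sqrt (((x₁+x₂)^2+(y₁+y₂)^2)^2+(z₁+z₂)^2)) ≤
      Real.sqrt (Real.sqrt ((x₁^2+y₁^2)^2+z₁^2)) +
      Real.sqrt (Real.sqrt ((x₂^2+y₂^2)^2+z₂^2)) := by
  have hr₁sq : (Real.sqrt (x₁^2+y₁^2))^2 = x₁^2+y₁^2 := Real.sq_sqrt (by positivity)
  have hr₂sq : (Real.sqrt (x₂^2+y₂^2))^2 = x₂^2+y₂^2 := Real.sq_sqrt (by positivity)
  have hle : (x₁+x₂)^2+(y₁+y₂)^2 ≤ (Real.sqrt (x₁^2+y₁^2) + Real.sqrt (x₂^2+y₂^2))^2 := by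
    have he := euclid x₁ y₁ x₂ y₂
    have hs := Real.sq_sqrt (show (0:ℝ) ≤ (x₁+x₂)^2+(y₁+y₂)^2 by positivity)
    have hn := Real.sqrt_nonneg ((x₁+x₂)^2+(y₁+y₂)^2)
    nlinarith [he, hs, hn, Real.sqrt_nonneg (x₁^2+y₁^2), Real.sqrt_nonneg (x₂^2+y₂^2)]
  have h := key2 ((x₁+x₂)^2+(y₁+y₂)^2) z₁ z₂ (Real.sqrt (x₁^2+y₁^2)) (Real.sqrt (x₂^2+y₂^2))
    (by positivity) (Real.sqrt_nonneg _) (Real.sqrt_nonneg _) hle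
  rwa [hr₁sq, hr₂sq] at h

noncomputable def heisDist (a b : Fin 3 → ℝ) : ℝ :=
  (((a 0 - b 0) ^ 2 + (a 1 - b 1) ^ 2) ^ 2 + (a 2 - b 2) ^ 2) ^ ((1 : ℝ) / 4)

theorem heisDist_is_metric :
    (∀ a b : Fin 3 → ℝ, heisDist a b = 0 ↔ a = b) ∧
    (∀ a b : Fin 3 → ℝ, heisDist a b = heisDist b a) ∧
    (∀ a b c : Fin 3 → ℝ, heisDist a b ≤ heisDist a c + heisDist c b) := by
  refine ⟨?_, ?_, ?_⟩
  · intro a b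
    unfold heisDist
    rw [Real.rpow_eq_zero (by positivity) (by norm_num)]
    constructor
    · intro h
      have hz : (a 2 - b 2)^2 = 0 := by
        nlinarith [sq_nonneg ((a 0 - b 0)^2 + (a 1 - b 1)^2), sq_nonneg (a 2 - b 2)]
      have hxy : (a 0 - b 0)^2 + (a 1 - b 1)^2 = 0 := by
        have h4 : ((a 0 - b 0)^2 + (a 1 - b 1)^2)^2 = 0 := by linarith
        exact pow_eq_zero_iff (by norm_num) |>.mp h4
      have h0 : a 0 = b 0 := by nlinarith [sq_nonneg (a 0 - b 0), sq_nonneg (a 1 - b 1)]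
      have h1 : a 1 = b 1 := by nlinarith [sq_nonneg (a 0 - b 0), sq_nonneg (a 1 - b 1)]
      have h2 : a 2 = b 2 := by nlinarith
      funext i
      fin_cases i <;> assumption
    · intro h
      subst h
      simp
  · intro a b
    unfold heisDist
    congr 1
    ring
  · intro a b c
    unfold heisDist
    rw [rpow4 _ (by positivity), rpow4 _ (by positivity), rpow4 _ (by positivity)]
    have h := key (a 0 - c 0) (a 1 - c 1) (a 2 - c 2) (c 0 - b 0) (c 1 - b 1) (c 2 - b 2)
    have e0 : a 0 - b 0 = (a 0 - c 0) + (c 0 - b 0) := by ring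
    have e1 : a 1 - b 1 = (a 1 - c 1) + (c 1 - b 1) := by ring
    have e2 : a 2 - b 2 = (a 2 - c 2) + (c 2 - b 2) := by ring
    rw [e0, e1, e2]
    exact h
end

section
/- Let ϖ and ϱ be two distinct Borel probability measures on ℝ. Then the total variation distance between the product measures ϖ^⊗n and ϱ^⊗n on ℝⁿ converges to 1 as n → ∞. -/
open MeasureTheory

/-- Total variation distance between two measures, as the supremum over
measurable sets of the absolute difference of the measures. -/
noncomputable def tvDist {α : Type*} [MeasurableSpace α] (μ ν : Measure α) : ℝ :=
  ⨆ A : {A : Set α // MeasurableSet A}, |(μ A.1).toReal - (ν A.1).toReal|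

section aux

/-- Type synonym of `ℝ` carrying `μ` as volume. -/
def TS (_ : Measure ℝ) : Type := ℝ
instance (μ : Measure ℝ) : MeasurableSpace (TS μ) := Real.measurableSpace
instance (μ : Measure ℝ) : MeasureSpace (TS μ) := ⟨μ⟩
instance (μ : Measure ℝ) [IsProbabilityMeasure μ] :
    IsProbabilityMeasure (volume : Measure (TS μ)) := ‹IsProbabilityMeasure μ›

variable (μ : Measure ℝ) [IsProbabilityMeasure μ]

lemma pi_integral (n : ℕ) (g : Fin n → ℝ → ℝ) :
    ∫ x : Fin n → ℝ, ∏ i, g i (x i) ∂(Measure.pi fun _ => μ) = ∏ i, ∫ t, g i t ∂μ :=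
  MeasureTheory.integral_fintype_prod_eq_prod (𝕜 := ℝ) (ι := Fin n) (E := fun _ => ℝ) g (μ := fun _ => μ)

lemma pi_integral_single {n : ℕ} (i : Fin n) (f : ℝ → ℝ) :
    ∫ x : Fin n → ℝ, f (x i) ∂(Measure.pi fun _ => μ) = ∫ t, f t ∂μ := by
  have h := pi_integral μ n (fun k => if k = i then f else fun _ => 1)
  have h1 : ∀ x : Fin n → ℝ,
      (∏ k, (if k = i then f else fun _ => 1) (x k)) = f (x i) := by
    intro x
    rw [Finset.prod_eq_single i (fun b _ hb => by simp [hb]) (by simp)]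
    simp
  have h2 : (∏ k : Fin n, ∫ t, (if k = i then f else fun _ => 1) t ∂μ) = ∫ t, f t ∂μ := by
    rw [Finset.prod_eq_single i (fun b _ hb => by simp [hb]) (by simp)]
    simp
  simp_rw [h1, h2] at h
  exact h

lemma pi_integral_pair {n : ℕ} {i j : Fin n} (hij : i ≠ j) (f g : ℝ → ℝ) :
    ∫ x : Fin n → ℝ, f (x i) * g (x j) ∂(Measure.pi fun _ => μ)
      = (∫ t, f t ∂μ) * ∫ t, g t ∂μ := by
  classical
  set h : Fin n → ℝ → ℝ := fun k => if k = i then f else if k = j then g else fun _ => 1 with hh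
  have key := pi_integral μ n h
  have h1 : ∀ x : Fin n → ℝ, (∏ k, h k (x k)) = f (x i) * g (x j) := by
    intro x
    rw [← Finset.prod_subset (Finset.subset_univ ({i, j} : Finset (Fin n)))
      (fun k _ hk => ?_), Finset.prod_pair hij]
    · simp [hh, hij, Ne.symm hij]
    · simp only [Finset.mem_insert, Finset.mem_singleton, not_or] at hk
      simp [hh, hk.1, hk.2]
  have h2 : (∏ k : Fin n, ∫ t, h k t ∂μ) = (∫ t, f t ∂μ) * ∫ t, g t ∂μ := by
    rw [← Finset.prod_subset (Finset.subset_univ ({i, j} : Finset (Fin n)))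
      (fun k _ hk => ?_), Finset.prod_pair hij]
    · simp [hh, hij, Ne.symm hij]
    · simp only [Finset.mem_insert, Finset.mem_singleton, not_or] at hk
      simp [hh, hk.1, hk.2]
  simp_rw [h1, h2] at key
  exact key

end aux


section cheb

variable {μ : Measure ℝ} [IsProbabilityMeasure μ]

lemma integrable_of_bound {δ : Type*} [MeasurableSpace δ] {ν : Measure δ}
    [IsProbabilityMeasure ν] {f : δ → ℝ} (hm : Measurable f) (C : ℝ)
    (hC : ∀ x, |f x| ≤ C) : Integrable f ν :=
  (MemLp.of_bound hm.aestronglyMeasurable C (Filter.Eventually.of_forall fun x => by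
    simpa using hC x)).integrable (le_refl 1)

lemma cheb {A : Set ℝ} (hA : MeasurableSet A) (n : ℕ) {ε : ℝ} (hε : 0 < ε) (hn : 0 < n) :
    (Measure.pi fun _ : Fin n => μ)
      {x | (n : ℝ) * ε ≤ |(∑ i, A.indicator (1 : ℝ → ℝ) (x i)) - n * (μ A).toReal|}
      ≤ ENNReal.ofReal ((n : ℝ) / ((n : ℝ) * ε) ^ 2) := by
  set p : ℝ := (μ A).toReal with hp
  have hp0 : 0 ≤ p := ENNReal.toReal_nonneg
  have hp1 : p ≤ 1 := by
    rw [hp]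
    exact ENNReal.toReal_le_of_le_ofReal zero_le_one (by simpa using prob_le_one)
  set f : ℝ → ℝ := fun t => A.indicator (1 : ℝ → ℝ) t - p with hf
  have hind_meas : Measurable (A.indicator (1 : ℝ → ℝ)) :=
    measurable_const.indicator hA
  have hf_meas : Measurable f := hind_meas.sub measurable_const
  have hf_bd : ∀ t, |f t| ≤ 1 := by
    intro t
    rw [hf]
    by_cases ht : t ∈ A <;>
      simp [Set.indicator_of_mem, Set.indicator_of_notMem, ht, abs_le] <;> constructor <;>
      linarith
  have hf_int : ∫ t, f t ∂μ = 0 := by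
    rw [hf]
    rw [integral_sub (integrable_of_bound hind_meas 1 (fun t => by
      by_cases ht : t ∈ A <;> simp [ht])) (integrable_const p)]
    rw [integral_indicator_one hA]
    simp [hp, measureReal_def]
  set X : (Fin n → ℝ) → ℝ := fun x => ∑ i, f (x i) with hX
  have hX_meas : Measurable X := Finset.measurable_sum _ fun i _ =>
    hf_meas.comp (measurable_pi_apply i)
  have hX_bd : ∀ x, |X x| ≤ (n : ℝ) := by
    intro x
    calc |X x| ≤ ∑ i : Fin n, |f (x i)| := Finset.abs_sum_le_sum_abs _ _
    _ ≤ ∑ _i : Fin n, (1 : ℝ) := Finset.sum_le_sum fun i _ => hf_bd _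
    _ = n := by simp
  have hX2 : MemLp X 2 (Measure.pi fun _ : Fin n => μ) :=
    MemLp.of_bound hX_meas.aestronglyMeasurable (n : ℝ)
      (Filter.Eventually.of_forall fun x => by simpa using hX_bd x)
  have hint1 : ∀ i : Fin n,
      Integrable (fun x : Fin n → ℝ => f (x i)) (Measure.pi fun _ : Fin n => μ) := fun i =>
    integrable_of_bound (f := fun x : Fin n → ℝ => f (x i))
      (hf_meas.comp (measurable_pi_apply i)) 1 (fun x => hf_bd _)
  have hint2 : ∀ i j : Fin n,
      Integrable (fun x : Fin n → ℝ => f (x i) * f (x j))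
        (Measure.pi fun _ : Fin n => μ) := by
    intro i j
    refine integrable_of_bound (f := fun x : Fin n → ℝ => f (x i) * f (x j))
      ((hf_meas.comp (measurable_pi_apply i)).mul (hf_meas.comp (measurable_pi_apply j)))
      1 (fun x => ?_)
    rw [abs_mul]
    calc |f (x i)| * |f (x j)| ≤ 1 * 1 :=
      mul_le_mul (hf_bd _) (hf_bd _) (abs_nonneg _) zero_le_one
    _ = 1 := one_mul 1
  have hEX : ∫ x, X x ∂(Measure.pi fun _ : Fin n => μ) = 0 := by
    show (∫ x : Fin n → ℝ, ∑ i, f (x i) ∂(Measure.pi fun _ : Fin n => μ)) = 0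
    rw [integral_finset_sum _ fun i _ => hint1 i]
    simp_rw [pi_integral_single μ _ f, hf_int]
    simp
  have hEX2 : ∫ x, X x ^ 2 ∂(Measure.pi fun _ : Fin n => μ) ≤ (n : ℝ) := by
    have expand : (fun x : Fin n → ℝ => X x ^ 2)
        = fun x => ∑ i : Fin n, ∑ j : Fin n, f (x i) * f (x j) := by
      funext x
      rw [sq, hX, Finset.sum_mul_sum]
    rw [show (∫ x, X x ^ 2 ∂(Measure.pi fun _ : Fin n => μ))
        = ∫ x, ∑ i : Fin n, ∑ j : Fin n, f (x i) * f (x j)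
            ∂(Measure.pi fun _ : Fin n => μ) from by rw [← expand]]
    rw [integral_finset_sum _ fun i _ => integrable_finset_sum _ fun j _ => hint2 i j]
    have inner : ∀ i : Fin n,
        (∫ x, ∑ j : Fin n, f (x i) * f (x j) ∂(Measure.pi fun _ : Fin n => μ)) ≤ 1 := by
      intro i
      rw [integral_finset_sum _ fun j _ => hint2 i j]
      have term : ∀ j : Fin n, j ≠ i →
          (∫ x, f (x i) * f (x j) ∂(Measure.pi fun _ : Fin n => μ)) = 0 := by
        intro j hji
        rw [pi_integral_pair μ (Ne.symm hji) f f, hf_int, mul_zero]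
      rw [Finset.sum_eq_single i (fun j _ hji => term j hji) (by simp)]
      have heq : (∫ x, f (x i) * f (x i) ∂(Measure.pi fun _ : Fin n => μ))
          = ∫ t, f t * f t ∂μ := pi_integral_single μ i (fun t => f t * f t)
      rw [heq]
      have hle : (∫ t, f t * f t ∂μ) ≤ ∫ _t, (1 : ℝ) ∂μ := by
        refine integral_mono_of_nonneg (Filter.Eventually.of_forall fun t =>
          mul_self_nonneg _) (integrable_const 1) (Filter.Eventually.of_forall fun t => ?_)
        show f t * f t ≤ 1
        have h2 := abs_le.1 (hf_bd t)
        nlinarith [h2.1, h2.2]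
      calc (∫ t, f t * f t ∂μ) ≤ ∫ _t, (1 : ℝ) ∂μ := hle
      _ = 1 := by simp
    calc (∑ i : Fin n, ∫ x, ∑ j : Fin n, f (x i) * f (x j) ∂(Measure.pi fun _ : Fin n => μ))
        ≤ ∑ _i : Fin n, (1 : ℝ) := Finset.sum_le_sum fun i _ => inner i
    _ = n := by simp
  have hvar : ProbabilityTheory.variance X (Measure.pi fun _ : Fin n => μ) ≤ (n : ℝ) := by
    rw [ProbabilityTheory.variance_eq_sub hX2, hEX]
    simpa [Pi.pow_apply] using hEX2
  have hc : (0 : ℝ) < (n : ℝ) * ε := by positivity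
  have cheb' := ProbabilityTheory.meas_ge_le_variance_div_sq hX2 hc
  rw [hEX] at cheb'
  have hset : {x : Fin n → ℝ |
      (n : ℝ) * ε ≤ |(∑ i, A.indicator (1 : ℝ → ℝ) (x i)) - n * p|}
      = {x | (n : ℝ) * ε ≤ |X x - 0|} := by
    ext x
    have hXx : X x = (∑ i, A.indicator (1 : ℝ → ℝ) (x i)) - n * p := by
      rw [hX]
      simp only [hf, Finset.sum_sub_distrib, Finset.sum_const, Finset.card_univ,
        Fintype.card_fin, nsmul_eq_mul]
    simp [hXx]
  rw [hset]
  refine le_trans cheb' (ENNReal.ofReal_le_ofReal ?_)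
  exact div_le_div_of_nonneg_right hvar (by positivity)

end cheb

section tv

variable {α : Type*} [MeasurableSpace α]

instance : Nonempty {A : Set α // MeasurableSet A} := ⟨⟨∅, MeasurableSet.empty⟩⟩

lemma toReal_prob_le_one (μ : Measure α) [IsProbabilityMeasure μ] (s : Set α) :
    (μ s).toReal ≤ 1 :=
  ENNReal.toReal_le_of_le_ofReal zero_le_one (by simpa using prob_le_one)

lemma tv_bddAbove (μ ν : Measure α) [IsProbabilityMeasure μ] [IsProbabilityMeasure ν] :
    BddAbove (Set.range fun A : {A : Set α // MeasurableSet A} =>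
      |(μ A.1).toReal - (ν A.1).toReal|) := by
  refine ⟨1, fun y hy => ?_⟩
  obtain ⟨A, rfl⟩ := hy
  have h1 := toReal_prob_le_one μ A.1
  have h2 := toReal_prob_le_one ν A.1
  have h3 : (0:ℝ) ≤ (μ A.1).toReal := ENNReal.toReal_nonneg
  have h4 : (0:ℝ) ≤ (ν A.1).toReal := ENNReal.toReal_nonneg
  rw [abs_le]
  constructor <;> linarith

lemma tvDist_le_one (μ ν : Measure α) [IsProbabilityMeasure μ] [IsProbabilityMeasure ν] :
    tvDist μ ν ≤ 1 := by
  refine ciSup_le fun A => ?_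
  have h1 := toReal_prob_le_one μ A.1
  have h2 := toReal_prob_le_one ν A.1
  have h3 : (0:ℝ) ≤ (μ A.1).toReal := ENNReal.toReal_nonneg
  have h4 : (0:ℝ) ≤ (ν A.1).toReal := ENNReal.toReal_nonneg
  rw [abs_le]
  constructor <;> linarith

lemma le_tvDist (μ ν : Measure α) [IsProbabilityMeasure μ] [IsProbabilityMeasure ν]
    {A : Set α} (hA : MeasurableSet A) :
    |(μ A).toReal - (ν A).toReal| ≤ tvDist μ ν :=
  le_ciSup (tv_bddAbove μ ν) ⟨A, hA⟩

lemma tvDist_comm (μ ν : Measure α) : tvDist μ ν = tvDist ν μ := by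
  unfold tvDist
  exact iSup_congr fun A => abs_sub_comm _ _

end tv

lemma helper (μ ν : Measure ℝ) [IsProbabilityMeasure μ] [IsProbabilityMeasure ν]
    {A : Set ℝ} (hA : MeasurableSet A) (hlt : (ν A).toReal < (μ A).toReal) :
    Filter.Tendsto
      (fun n : ℕ => tvDist (Measure.pi fun _ : Fin n => μ) (Measure.pi fun _ : Fin n => ν))
      Filter.atTop (nhds 1) := by
  set p : ℝ := (μ A).toReal with hp
  set q : ℝ := (ν A).toReal with hq
  set ε : ℝ := (p - q) / 2 with hεdef
  have hε0 : 0 < ε := by rw [hεdef]; linarith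
  set d : ℕ → ℝ := fun n => (n : ℝ) / ((n : ℝ) * ε) ^ 2 with hd
  have hd0 : ∀ n, 0 ≤ d n := fun n => by rw [hd]; positivity
  have hind_meas : Measurable (A.indicator (1 : ℝ → ℝ)) := measurable_const.indicator hA
  have key : ∀ n : ℕ, 0 < n →
      1 - 2 * d n ≤ tvDist (Measure.pi fun _ : Fin n => μ) (Measure.pi fun _ : Fin n => ν) := by
    intro n hn
    set B : Set (Fin n → ℝ) :=
      {x | (n : ℝ) * ((p + q) / 2) ≤ ∑ i, A.indicator (1 : ℝ → ℝ) (x i)} with hB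
    have hBmeas : MeasurableSet B :=
      measurableSet_le measurable_const
        (Finset.measurable_sum _ fun i _ => hind_meas.comp (measurable_pi_apply i))
    have hμB : (Measure.pi fun _ : Fin n => μ) Bᶜ ≤ ENNReal.ofReal (d n) := by
      refine le_trans (measure_mono fun x hx => ?_) (cheb hA n hε0 hn)
      simp only [hB, Set.mem_compl_iff, Set.mem_setOf_eq, not_le] at hx
      simp only [Set.mem_setOf_eq]
      rw [← hp]
      have h1 : (n : ℝ) * p - (∑ i, A.indicator (1 : ℝ → ℝ) (x i)) ≤
          |(∑ i, A.indicator (1 : ℝ → ℝ) (x i)) - n * p| := by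
        rw [abs_sub_comm]; exact le_abs_self _
      have h2 : (n : ℝ) * ((p + q) / 2) = n * p - n * ε := by rw [hεdef]; ring
      have hn1 : (1:ℝ) ≤ n := by exact_mod_cast hn
      nlinarith
    have hνB : (Measure.pi fun _ : Fin n => ν) B ≤ ENNReal.ofReal (d n) := by
      refine le_trans (measure_mono fun x hx => ?_) (cheb hA n hε0 hn)
      simp only [hB, Set.mem_setOf_eq] at hx
      simp only [Set.mem_setOf_eq]
      rw [← hq]
      have h1 : (∑ i, A.indicator (1 : ℝ → ℝ) (x i)) - (n : ℝ) * q ≤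
          |(∑ i, A.indicator (1 : ℝ → ℝ) (x i)) - n * q| := le_abs_self _
      have h2 : (n : ℝ) * ((p + q) / 2) = n * q + n * ε := by rw [hεdef]; ring
      linarith
    have haν : ((Measure.pi fun _ : Fin n => ν) B).toReal ≤ d n :=
      ENNReal.toReal_le_of_le_ofReal (hd0 n) hνB
    have haμc : ((Measure.pi fun _ : Fin n => μ) Bᶜ).toReal ≤ d n :=
      ENNReal.toReal_le_of_le_ofReal (hd0 n) hμB
    have hsum : ((Measure.pi fun _ : Fin n => μ) B).toReal
        + ((Measure.pi fun _ : Fin n => μ) Bᶜ).toReal = 1 := by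
      have h := prob_add_prob_compl (μ := Measure.pi fun _ : Fin n => μ) hBmeas
      have := congrArg ENNReal.toReal h
      rwa [ENNReal.toReal_add (measure_ne_top _ _) (measure_ne_top _ _),
        ENNReal.toReal_one] at this
    have haμ : 1 - d n ≤ ((Measure.pi fun _ : Fin n => μ) B).toReal := by linarith
    calc 1 - 2 * d n
        ≤ ((Measure.pi fun _ : Fin n => μ) B).toReal
          - ((Measure.pi fun _ : Fin n => ν) B).toReal := by linarith
      _ ≤ |((Measure.pi fun _ : Fin n => μ) B).toReal
          - ((Measure.pi fun _ : Fin n => ν) B).toReal| := le_abs_self _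
      _ ≤ tvDist (Measure.pi fun _ : Fin n => μ) (Measure.pi fun _ : Fin n => ν) :=
          le_tvDist _ _ hBmeas
  have hdlim : Filter.Tendsto d Filter.atTop (nhds 0) := by
    have h1 : Filter.Tendsto (fun n : ℕ => (1 / ε ^ 2) * (1 / (n : ℝ)))
        Filter.atTop (nhds 0) := by
      have h0 : Filter.Tendsto (fun n : ℕ => (1 / ε ^ 2) * (1 / (n : ℝ)))
          Filter.atTop (nhds ((1 / ε ^ 2) * 0)) :=
        tendsto_one_div_atTop_nhds_zero_nat.const_mul _
      rwa [mul_zero] at h0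
    refine h1.congr' ?_
    filter_upwards [Filter.eventually_ge_atTop 1] with n hn
    have hn0 : (0:ℝ) < (n : ℝ) := by exact_mod_cast hn
    rw [hd]
    field_simp
  have hlower : Filter.Tendsto (fun n : ℕ => 1 - 2 * d n) Filter.atTop (nhds 1) := by
    have := (tendsto_const_nhds (x := (1:ℝ)) (f := Filter.atTop (α := ℕ))).sub
      (hdlim.const_mul 2)
    simpa using this
  refine tendsto_of_tendsto_of_tendsto_of_le_of_le' hlower tendsto_const_nhds ?_ ?_
  · filter_upwards [Filter.eventually_gt_atTop 0] with n hn using key n hn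
  · exact Filter.Eventually.of_forall fun n => tvDist_le_one _ _

theorem tv_of_products_tendsto_one
    (ϖ ϱ : Measure ℝ) [IsProbabilityMeasure ϖ] [IsProbabilityMeasure ϱ]
    (hne : ϖ ≠ ϱ) :
    Filter.Tendsto
      (fun n : ℕ => tvDist (Measure.pi fun _ : Fin n => ϖ) (Measure.pi fun _ : Fin n => ϱ))
      Filter.atTop (nhds 1) := by
  have hex : ∃ s, MeasurableSet s ∧ ϖ s ≠ ϱ s := by
    by_contra h
    push_neg at h
    exact hne (Measure.ext fun s hs => h s hs)
  obtain ⟨A, hA, hAne⟩ := hex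
  have h1 : (ϖ A).toReal ≠ (ϱ A).toReal := fun h =>
    hAne ((ENNReal.toReal_eq_toReal_iff' (measure_ne_top _ _) (measure_ne_top _ _)).1 h)
  rcases h1.lt_or_gt with h | h
  · have := helper ϱ ϖ hA h
    refine this.congr fun n => ?_
    exact tvDist_comm _ _
  · exact helper ϖ ϱ hA h
end

section
/- Let P be a Polish space, μ_n, μ Borel probability measures on P with μ_n converging weakly to μ. Let f_n, f be continuous real-valued functions on P with sup_n ‖f_n‖_∞ < ∞, such that whenever x_n → x in P one has f_n(x_n) → f(x). Then ∫ f_n dμ_n → ∫ f dμ. -/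
open MeasureTheory Filter Topology
open scoped ENNReal

-- auxiliary: continuous convergence gives locally uniform-ish control
theorem neigh_key
    {P : Type*} [MetricSpace P]
    (f : ℕ → P → ℝ) (g : P → ℝ)
    (hconv : ∀ (x : P) (xs : ℕ → P), Filter.Tendsto xs Filter.atTop (nhds x) →
      Filter.Tendsto (fun n => f n (xs n)) Filter.atTop (nhds (g x)))
    (x : P) (ε : ℝ) (hε : 0 < ε) :
    ∃ N : ℕ, ∃ U : Set P, IsOpen U ∧ x ∈ U ∧ ∀ n ≥ N, ∀ y ∈ U, |f n y - g x| ≤ ε := by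
  classical
  by_contra hcon
  push_neg at hcon
  have H : ∀ (N k : ℕ), ∃ q : ℕ × P, N ≤ q.1 ∧ dist q.2 x < 1/((k:ℝ)+1) ∧
      ε < |f q.1 q.2 - g x| := by
    intro N k
    obtain ⟨n, hn, y, hy, hy2⟩ := hcon N (Metric.ball x (1/((k:ℝ)+1))) Metric.isOpen_ball
      (Metric.mem_ball_self (by positivity))
    exact ⟨⟨n, y⟩, hn, by simpa [Metric.mem_ball] using hy, hy2⟩
  choose q hq1 hq2 hq3 using H
  set φ : ℕ → ℕ × P := fun k => Nat.rec (q 0 0) (fun k ih => q (ih.1 + 1) (k+1)) k with hφ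
  set n : ℕ → ℕ := fun k => (φ k).1 with hn
  set y : ℕ → P := fun k => (φ k).2 with hy
  have hmono : StrictMono n := by
    apply strictMono_nat_of_lt_succ
    intro k
    have : (φ k).1 + 1 ≤ (q ((φ k).1 + 1) (k+1)).1 := hq1 _ _
    exact Nat.lt_of_lt_of_le (Nat.lt_succ_self _) this
  have hprop : ∀ k, dist (y k) x < 1/((k:ℝ)+1) ∧ ε < |f (n k) (y k) - g x| := by
    intro k
    cases k with
    | zero => exact ⟨hq2 0 0, hq3 0 0⟩
    | succ k => exact ⟨hq2 ((φ k).1 + 1) (k+1), hq3 ((φ k).1 + 1) (k+1)⟩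
  set xs : ℕ → P := fun m => if h : ∃ k, n k = m then y h.choose else x with hxsdef
  have hxs_eq : ∀ k, xs (n k) = y k := by
    intro k
    have h : ∃ k', n k' = n k := ⟨k, rfl⟩
    have hc : h.choose = k := hmono.injective h.choose_spec
    simp only [hxsdef, dif_pos h, hc]
  have hxs : Filter.Tendsto xs Filter.atTop (nhds x) := by
    rw [Metric.tendsto_atTop]
    intro δ hδ
    obtain ⟨k0, hk0⟩ := exists_nat_one_div_lt (K := ℝ) hδ
    refine ⟨n k0, fun m hm => ?_⟩
    by_cases h : ∃ k, n k = m
    · have hc : n h.choose = m := h.choose_spec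
      have hk : k0 ≤ h.choose := by
        by_contra hlt
        push_neg at hlt
        have := hmono hlt
        omega
      have h1 : dist (xs m) x < 1/((h.choose:ℝ)+1) := by
        have h1' : dist (xs (n h.choose)) x < 1/((h.choose:ℝ)+1) := by
          rw [hxs_eq]; exact (hprop h.choose).1
        rwa [hc] at h1'
      have h2 : 1/((h.choose:ℝ)+1) ≤ 1/((k0:ℝ)+1) := by
        apply one_div_le_one_div_of_le (by positivity)
        exact_mod_cast by omega
      linarith
    · simp only [hxsdef, dif_neg h]
      simpa using hδ
  have h2 : Filter.Tendsto (fun k => f (n k) (xs (n k))) Filter.atTop (nhds (g x)) :=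
    (hconv x xs hxs).comp hmono.tendsto_atTop
  obtain ⟨K, hK⟩ := Metric.tendsto_atTop.mp h2 ε hε
  have := hK K le_rfl
  rw [Real.dist_eq, hxs_eq] at this
  exact absurd this (not_lt.mpr (le_of_lt (hprop K).2))

theorem strengthened_weak_convergence
    {P : Type*} [TopologicalSpace P] [PolishSpace P]
    [MeasurableSpace P] [BorelSpace P]
    (μ : ℕ → Measure P) (ν : Measure P)
    [∀ n, IsProbabilityMeasure (μ n)] [IsProbabilityMeasure ν]
    (hweak : ∀ g : P → ℝ, Continuous g → (∃ M, ∀ x, |g x| ≤ M) →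
      Filter.Tendsto (fun n => ∫ x, g x ∂(μ n)) Filter.atTop (nhds (∫ x, g x ∂ν)))
    (f : ℕ → P → ℝ) (g : P → ℝ)
    (hf_cont : ∀ n, Continuous (f n)) (hg_cont : Continuous g)
    (hf_bdd : ∃ M, ∀ n x, |f n x| ≤ M)
    (hconv : ∀ (x : P) (xs : ℕ → P), Filter.Tendsto xs Filter.atTop (nhds x) →
      Filter.Tendsto (fun n => f n (xs n)) Filter.atTop (nhds (g x))) :
    Filter.Tendsto (fun n => ∫ x, f n x ∂(μ n)) Filter.atTop
      (nhds (∫ x, g x ∂ν)) := by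
  letI := TopologicalSpace.upgradeIsCompletelyMetrizable P
  obtain ⟨M0, hM0⟩ := hf_bdd
  set M := max M0 0 with hMdef
  have hM : ∀ n x, |f n x| ≤ M := fun n x => (hM0 n x).trans (le_max_left _ _)
  have hMpos : 0 ≤ M := le_max_right _ _
  have hgM : ∀ x, |g x| ≤ M := by
    intro x
    exact le_of_tendsto ((hconv x (fun _ => x) tendsto_const_nhds).abs)
      (Filter.Eventually.of_forall fun n => hM n x)
  -- weak convergence in the ProbabilityMeasure sense
  let μ' : ℕ → ProbabilityMeasure P := fun n => ⟨μ n, inferInstance⟩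
  let ν' : ProbabilityMeasure P := ⟨ν, inferInstance⟩
  have hμ' : Filter.Tendsto μ' Filter.atTop (nhds ν') := by
    rw [ProbabilityMeasure.tendsto_iff_forall_integral_tendsto]
    intro h
    exact hweak h h.continuous ⟨‖h‖, fun x => by
      simpa [Real.norm_eq_abs] using h.norm_coe_le_norm x⟩
  have hopen : ∀ G : Set P, IsOpen G →
      ν G ≤ Filter.liminf (fun i => μ i G) Filter.atTop := fun G hG =>
    ProbabilityMeasure.le_liminf_measure_open_of_tendsto hμ' hG
  rw [Metric.tendsto_atTop]
  intro ε hε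
  set ε4 : ℝ := ε/4 with hε4def
  have hε4 : 0 < ε4 := by positivity
  set E : ℕ → Set P := fun N => {z | ∀ n, N ≤ n → |f n z - g z| ≤ ε4} with hEdef
  have hEclosed : ∀ N, IsClosed (E N) := by
    intro N
    have : E N = ⋂ (n : ℕ) (_ : N ≤ n), {z | |f n z - g z| ≤ ε4} := by
      ext z; simp [hEdef, Set.mem_iInter]
    rw [this]
    exact isClosed_iInter fun n => isClosed_iInter fun _ =>
      isClosed_le (Continuous.abs ((hf_cont n).sub hg_cont)) continuous_const
  have hEmono : Monotone fun N => interior (E N) := by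
    intro N N' hNN'
    apply interior_mono
    intro z hz n hn
    exact hz n (le_trans hNN' hn)
  have hEunion : (⋃ N, interior (E N)) = Set.univ := by
    rw [Set.eq_univ_iff_forall]
    intro x
    obtain ⟨N, U, hUopen, hxU, hU⟩ := neigh_key f g hconv x (ε4/2) (by positivity)
    refine Set.mem_iUnion.mpr ⟨N, ?_⟩
    rw [mem_interior]
    refine ⟨U ∩ g ⁻¹' (Metric.ball (g x) (ε4/2)), ?_, hUopen.inter
      (hg_cont.isOpen_preimage _ Metric.isOpen_ball),
      ⟨hxU, Metric.mem_ball_self (by positivity)⟩⟩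
    rintro z ⟨hzU, hzb⟩ n hn
    have h1 : |f n z - g x| ≤ ε4/2 := hU n hn z hzU
    have h2 : |g z - g x| < ε4/2 := by simpa [Real.dist_eq] using hzb
    calc |f n z - g z| ≤ |f n z - g x| + |g x - g z| := abs_sub_le _ _ _
      _ ≤ ε4/2 + ε4/2 := add_le_add h1 (by rw [abs_sub_comm]; exact h2.le)
      _ = ε4 := by ring
  set δ : ℝ := ε4 / (M + 1) with hδdef
  have hδ : 0 < δ := by positivity
  set η : ℝ≥0∞ := ENNReal.ofReal (δ/2) with hηdef
  have hη0 : η ≠ 0 := (ENNReal.ofReal_pos.mpr (by positivity)).ne'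
  -- pick N with ν (interior (E N)) close to 1
  have htend : Filter.Tendsto (fun N => ν (interior (E N))) Filter.atTop (nhds 1) := by
    have := tendsto_measure_iUnion_atTop (μ := ν) hEmono
    rw [hEunion] at this
    simpa [Function.comp_def] using this
  have hlt1 : (1 : ℝ≥0∞) - η < 1 :=
    ENNReal.sub_lt_self ENNReal.one_ne_top one_ne_zero hη0
  obtain ⟨N, hN⟩ := (htend.eventually (eventually_gt_nhds hlt1)).exists
  -- eventually μ n (interior (E N)) > 1 - η
  have hliminf : (1:ℝ≥0∞) - η < Filter.liminf (fun i => μ i (interior (E N))) Filter.atTop :=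
    lt_of_lt_of_le hN (hopen _ isOpen_interior)
  have hev : ∀ᶠ i in Filter.atTop, (1:ℝ≥0∞) - η < μ i (interior (E N)) :=
    Filter.eventually_lt_of_lt_liminf hliminf
  -- eventually the g-integrals are close
  have hevg : ∀ᶠ i in Filter.atTop,
      dist (∫ x, g x ∂(μ i)) (∫ x, g x ∂ν) < ε4 :=
    Metric.tendsto_nhds.mp (hweak g hg_cont ⟨M, hgM⟩) ε4 hε4
  have hfinal : ∀ᶠ i in Filter.atTop, dist (∫ x, f i x ∂(μ i)) (∫ x, g x ∂ν) < ε := by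
    filter_upwards [hev, hevg, Filter.eventually_ge_atTop N] with i hi1 hi2 hi3
    -- small complement measure
    have hEmeas : MeasurableSet (E N) := (hEclosed N).measurableSet
    have hcompl : μ i (E N)ᶜ ≤ η := by
      have h1 : μ i (E N)ᶜ ≤ μ i (interior (E N))ᶜ :=
        measure_mono (Set.compl_subset_compl.mpr interior_subset)
      have h2 : μ i (interior (E N))ᶜ = 1 - μ i (interior (E N)) := by
        rw [measure_compl isOpen_interior.measurableSet (measure_ne_top _ _)]
        simp
      have h3 : (1:ℝ≥0∞) - μ i (interior (E N)) ≤ 1 - (1 - η) :=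
        tsub_le_tsub_left hi1.le 1
      calc μ i (E N)ᶜ ≤ 1 - μ i (interior (E N)) := h2 ▸ h1
        _ ≤ 1 - (1 - η) := h3
        _ ≤ η := tsub_tsub_le
    have hcompl' : (μ i (E N)ᶜ).toReal ≤ δ/2 :=
      ENNReal.toReal_le_of_le_ofReal (by positivity) hcompl
    -- integral bound
    have hintf : Integrable (f i) (μ i) :=
      (integrable_const M).mono' (hf_cont i).aestronglyMeasurable
        (Filter.Eventually.of_forall fun x => by
          rw [Real.norm_eq_abs]; exact hM i x)
    have hintg : Integrable g (μ i) :=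
      (integrable_const M).mono' hg_cont.aestronglyMeasurable
        (Filter.Eventually.of_forall fun x => by
          rw [Real.norm_eq_abs]; exact hgM x)
    have hintb : Integrable (fun x => ε4 + (E N)ᶜ.indicator (fun _ => 2*M) x) (μ i) :=
      (integrable_const ε4).add ((integrable_const (2*M)).indicator hEmeas.compl)
    have hbound : ∀ x, |f i x - g x| ≤ ε4 + (E N)ᶜ.indicator (fun _ => 2*M) x := by
      intro x
      by_cases hx : x ∈ E N
      · have := hx i hi3
        have hind : (0:ℝ) ≤ (E N)ᶜ.indicator (fun _ => 2*M) x :=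
          Set.indicator_nonneg (fun _ _ => by linarith) x
        linarith
      · have hind : (E N)ᶜ.indicator (fun _ => 2*M) x = 2*M := by
          simp [Set.indicator_of_mem, hx]
        rw [hind]
        have h1 := hM i x
        have h2 := hgM x
        calc |f i x - g x| ≤ |f i x| + |g x| := abs_sub _ _
          _ ≤ M + M := add_le_add h1 h2
          _ ≤ ε4 + 2*M := by linarith
    have habs : |∫ x, f i x ∂(μ i) - ∫ x, g x ∂(μ i)| ≤ ε4 + 2*M*(δ/2) := by
      rw [← integral_sub hintf hintg]
      have h1 : |∫ x, (f i x - g x) ∂(μ i)| ≤ ∫ x, |f i x - g x| ∂(μ i) := by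
        simpa [Real.norm_eq_abs] using
          norm_integral_le_integral_norm (μ := μ i) (fun x => f i x - g x)
      have h2 : ∫ x, |f i x - g x| ∂(μ i) ≤
          ∫ x, (ε4 + (E N)ᶜ.indicator (fun _ => 2*M) x) ∂(μ i) :=
        integral_mono (hintf.sub hintg).abs hintb hbound
      have h3 : ∫ x, (ε4 + (E N)ᶜ.indicator (fun _ => 2*M) x) ∂(μ i)
          = ε4 + (μ i (E N)ᶜ).toReal * (2*M) := by
        rw [integral_add (integrable_const ε4)
          ((integrable_const (2*M)).indicator hEmeas.compl)]
        rw [integral_indicator_const _ hEmeas.compl]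
        simp [smul_eq_mul, measureReal_def]
      have h4 : (μ i (E N)ᶜ).toReal * (2*M) ≤ (δ/2) * (2*M) :=
        mul_le_mul_of_nonneg_right hcompl' (by linarith)
      rw [h3] at h2
      calc |∫ x, (f i x - g x) ∂(μ i)| ≤ ε4 + (μ i (E N)ᶜ).toReal * (2*M) :=
            le_trans h1 h2
        _ ≤ ε4 + (δ/2)*(2*M) := by linarith
        _ = ε4 + 2*M*(δ/2) := by ring
    have hMδ : M * δ ≤ ε4 := by
      rw [hδdef, mul_comm, div_mul_eq_mul_div, div_le_iff₀ (by positivity)]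
      nlinarith
    have htri : dist (∫ x, f i x ∂(μ i)) (∫ x, g x ∂ν) ≤
        |∫ x, f i x ∂(μ i) - ∫ x, g x ∂(μ i)| + dist (∫ x, g x ∂(μ i)) (∫ x, g x ∂ν) := by
      rw [Real.dist_eq, Real.dist_eq]
      have := abs_sub_le (∫ x, f i x ∂(μ i)) (∫ x, g x ∂(μ i)) (∫ x, g x ∂ν)
      linarith
    have : 2*M*(δ/2) = M*δ := by ring
    rw [this] at habs
    calc dist (∫ x, f i x ∂(μ i)) (∫ x, g x ∂ν) ≤
        |∫ x, f i x ∂(μ i) - ∫ x, g x ∂(μ i)| + dist (∫ x, g x ∂(μ i)) (∫ x, g x ∂ν) := htri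
      _ < (ε4 + M*δ) + ε4 := by linarith
      _ ≤ (ε4 + ε4) + ε4 := by linarith
      _ < ε := by rw [hε4def]; linarith
  exact Filter.eventually_atTop.mp hfinal
end
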